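/- arXiv:2211.15011 — 4 statements merged into one kernel-verified Lean document; each statement's English description precedes it below -/
import Mathlib

section
/- Let m ≥ 1 and l ≥ 1 be integers, and let C_0, C_1, …, C_l be the unique rational numbers such that the polynomial identity ∏_{i=1}^{l}(X + m + i) = Σ_{i=0}^{l} C_i·∏_{λ=0}^{i-1}(X − λ) holds in ℚ[X]. Then (2l+m)!/(l!·(l+m)!) − (l+m)!/(l!·m!) − Σ_{i=0}^{l-1} C_i/(l−i)! = 1 − (l+m)!/(l!·m!), and in particular this quantity is nonzero. -/
open Polynomial Finset

lemma aux1 (a : ℕ) : ∀ n : ℕ, (∏ i ∈ Finset.Icc 1 n, (a + i)) * a.factorial = (a + n).factorial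
  | 0 => by simp
  | n + 1 => by
    rw [Finset.prod_Icc_succ_top (by omega), mul_comm _ (a + (n+1)), mul_assoc, aux1 a n,
      ← Nat.add_assoc]
    exact (Nat.factorial_succ _).symm

lemma aux2 (l : ℕ) : ∀ i : ℕ, i ≤ l →
    (∏ k ∈ Finset.range i, ((l : ℚ) - k)) * (((l - i).factorial : ℕ) : ℚ) = (l.factorial : ℚ)
  | 0, _ => by simp
  | i + 1, h => by
    rw [Finset.prod_range_succ]
    have h1 : i < l := h
    have h2 : l - i = (l - (i + 1)) + 1 := by omega
    have h3 : ((l : ℚ) - i) = ((l - i : ℕ) : ℚ) := by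
      push_cast [Nat.cast_sub h1.le]; ring
    have := aux2 l i h1.le
    rw [h2, Nat.factorial_succ] at this
    rw [mul_assoc, h3]
    rw [← this]
    push_cast [h2]
    ring

theorem stmt_5 (m l : ℕ) (hm : 1 ≤ m) (hl : 1 ≤ l) (C : ℕ → ℚ)
    (hC : (∏ i ∈ Finset.Icc 1 l, (Polynomial.X + Polynomial.C ((m : ℚ) + (i : ℚ)))) =
      ∑ i ∈ Finset.range (l + 1), Polynomial.C (C i) *
        ∏ k ∈ Finset.range i, (Polynomial.X - Polynomial.C ((k : ℚ)))) :
    ((2 * l + m).factorial : ℚ) / ((l.factorial : ℚ) * ((l + m).factorial : ℚ)) -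
        (((l + m).factorial : ℚ) / ((l.factorial : ℚ) * (m.factorial : ℚ))) -
        ∑ i ∈ Finset.range l, C i / (((l - i).factorial : ℚ)) =
      1 - ((l + m).factorial : ℚ) / ((l.factorial : ℚ) * (m.factorial : ℚ)) ∧
    1 - ((l + m).factorial : ℚ) / ((l.factorial : ℚ) * (m.factorial : ℚ)) ≠ 0 := by
  -- monicity of the falling factorial products
  have hQmonic : ∀ i : ℕ, (∏ k ∈ Finset.range i, (X - Polynomial.C ((k : ℚ)))).Monic := by
    intro i
    exact monic_prod_of_monic _ _ fun k _ => monic_X_sub_C _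
  have hQdeg : ∀ i : ℕ, (∏ k ∈ Finset.range i, (X - Polynomial.C ((k : ℚ)))).natDegree = i := by
    intro i
    have h := Polynomial.natDegree_prod_of_monic (Finset.range i)
      (fun k : ℕ => X - Polynomial.C ((k : ℚ))) (fun k _ => monic_X_sub_C _)
    rw [h]
    simp only [Polynomial.natDegree_X_sub_C]
    simp
  -- LHS is monic of degree l
  have hLmonic : (∏ i ∈ Finset.Icc 1 l, (X + Polynomial.C ((m : ℚ) + (i : ℚ)))).Monic :=
    monic_prod_of_monic _ _ fun i _ => monic_X_add_C _
  have hLdeg : (∏ i ∈ Finset.Icc 1 l, (X + Polynomial.C ((m : ℚ) + (i : ℚ)))).natDegree = l := by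
    have h := Polynomial.natDegree_prod_of_monic (Finset.Icc 1 l)
      (fun i : ℕ => X + Polynomial.C ((m : ℚ) + (i : ℚ))) (fun i _ => monic_X_add_C _)
    rw [h]
    simp only [Polynomial.natDegree_X_add_C]
    simp
  -- C l = 1 by comparing coefficient l
  have hCl : C l = 1 := by
    have := congrArg (fun p => Polynomial.coeff p l) hC
    simp only [Polynomial.finset_sum_coeff, Polynomial.coeff_C_mul] at this
    rw [Finset.sum_range_succ] at this
    rw [Finset.sum_eq_zero (fun i hi => by
      rw [Polynomial.coeff_eq_zero_of_natDegree_lt (by rw [hQdeg]; exact Finset.mem_range.mp hi),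
        mul_zero])] at this
    have hc1 : (∏ k ∈ Finset.range l, (X - Polynomial.C ((k : ℚ)))).coeff l = 1 := by
      have := (hQmonic l).leadingCoeff
      rwa [Polynomial.leadingCoeff, hQdeg] at this
    have hc2 : (∏ i ∈ Finset.Icc 1 l, (X + Polynomial.C ((m : ℚ) + (i : ℚ)))).coeff l = 1 := by
      have := hLmonic.leadingCoeff
      rwa [Polynomial.leadingCoeff, hLdeg] at this
    rw [hc2, hc1, mul_one, zero_add] at this
    exact this.symm
  -- evaluate at X = l
  set D : ℕ → ℚ := fun i => ∏ k ∈ Finset.range i, ((l : ℚ) - k) with hD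
  have heval : (∏ i ∈ Finset.Icc 1 l, ((l : ℚ) + ((m : ℚ) + (i : ℚ)))) =
      ∑ i ∈ Finset.range (l + 1), C i * D i := by
    have := congrArg (Polynomial.eval ((l : ℚ))) hC
    simpa [Polynomial.eval_prod, Polynomial.eval_finset_sum] using this
  -- value of A
  have hA : (∏ i ∈ Finset.Icc 1 l, ((l : ℚ) + ((m : ℚ) + (i : ℚ)))) * (((l + m).factorial : ℕ) : ℚ)
      = (((2 * l + m).factorial : ℕ) : ℚ) := by
    have h := aux1 (l + m) l
    have : ((∏ i ∈ Finset.Icc 1 l, (l + m + i) : ℕ) : ℚ) * (((l + m).factorial : ℕ) : ℚ)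
        = (((l + m + l).factorial : ℕ) : ℚ) := by exact_mod_cast congrArg (Nat.cast (R := ℚ)) h
    have h2 : l + m + l = 2 * l + m := by ring
    rw [h2] at this
    rw [← this]
    congr 1
    push_cast
    apply Finset.prod_congr rfl
    intro i _
    ring
  have hDl : D l = (l.factorial : ℚ) := by
    have := aux2 l l le_rfl
    simpa using this
  -- sum splitting
  have hsum : ∑ i ∈ Finset.range l, C i * D i =
      (∏ i ∈ Finset.Icc 1 l, ((l : ℚ) + ((m : ℚ) + (i : ℚ)))) - (l.factorial : ℚ) := by
    rw [Finset.sum_range_succ, hCl, one_mul, hDl] at heval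
    linarith [heval]
  have hlfac : ((l.factorial : ℕ) : ℚ) ≠ 0 := Nat.cast_ne_zero.mpr l.factorial_ne_zero
  have hterm : ∀ i ∈ Finset.range l, C i / (((l - i).factorial : ℕ) : ℚ)
      = C i * D i / (l.factorial : ℚ) := by
    intro i hi
    have h := aux2 l i (Finset.mem_range.mp hi).le
    have hne : (((l - i).factorial : ℕ) : ℚ) ≠ 0 := Nat.cast_ne_zero.mpr (l - i).factorial_ne_zero
    field_simp
    rw [← h]
    ring
  have hgoalsum : ∑ i ∈ Finset.range l, C i / (((l - i).factorial : ℕ) : ℚ)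
      = ((∏ i ∈ Finset.Icc 1 l, ((l : ℚ) + ((m : ℚ) + (i : ℚ)))) - (l.factorial : ℚ)) / (l.factorial : ℚ) := by
    rw [Finset.sum_congr rfl hterm, ← Finset.sum_div, hsum]
  constructor
  · rw [hgoalsum, ← hA]
    have hlm : (((l + m).factorial : ℕ) : ℚ) ≠ 0 := Nat.cast_ne_zero.mpr (l + m).factorial_ne_zero
    have hmf : ((m.factorial : ℕ) : ℚ) ≠ 0 := Nat.cast_ne_zero.mpr m.factorial_ne_zero
    field_simp
    ring
  · -- nonzeroness
    have hlt : l.factorial * m.factorial < (l + m).factorial := by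
      have h1 := Nat.choose_mul_factorial_mul_factorial (Nat.le_add_right l m)
      have h2 : 2 ≤ (l + m).choose l := by
        calc 2 ≤ l + 1 := by omega
        _ = (l + 1).choose l := (Nat.choose_succ_self_right l).symm
        _ ≤ (l + m).choose l := Nat.choose_le_choose l (by omega)
      have h3 : l + m - l = m := by omega
      rw [h3] at h1
      calc l.factorial * m.factorial < 2 * (l.factorial * m.factorial) := by
            have := Nat.mul_pos l.factorial_pos m.factorial_pos; omega
        _ ≤ (l + m).choose l * l.factorial * m.factorial := by
            rw [mul_assoc]; exact Nat.mul_le_mul_right _ h2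
        _ = (l + m).factorial := h1
    have hne : ((l + m).factorial : ℚ) ≠ (l.factorial : ℚ) * (m.factorial : ℚ) := by
      intro h
      have : ((l + m).factorial : ℚ) = ((l.factorial * m.factorial : ℕ) : ℚ) := by push_cast; exact h
      exact absurd (Nat.cast_injective this) (Nat.ne_of_lt hlt).symm
    intro h
    apply hne
    have hlfac' : (l.factorial : ℚ) * (m.factorial : ℚ) ≠ 0 := by
      apply mul_ne_zero hlfac (Nat.cast_ne_zero.mpr m.factorial_ne_zero)
    field_simp at h
    linarith [h]
end

section
/- Let m be a nonnegative integer. For all complex numbers a, b, and z, (1/π)·∫_ℂ e^{a·w + b·conj(w)}·q_m(conj(w)·z)·e^{conj(z)·w}·e^{-|w|^2} dA(w) = e^{b·(a + conj(z))}·q_m(z·(a + conj(z))). -/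
open Complex MeasureTheory
open scoped ComplexConjugate

/-- `q_m(u)`, the Taylor polynomial of `e^u` of order `m-1`. -/
noncomputable def qpoly (m : ℕ) (u : ℂ) : ℂ :=
  ∑ k ∈ Finset.range m, u ^ k / (k.factorial : ℂ)

/-!
Expanding `q_m`, the integral becomes a combination of the moments
`∫ conj w ^ k * exp (α w + β conj w - |w|²) dA(w) = π α ^ k exp (α β)`.
For `k = 0` this is a product of two one-dimensional Gaussian integrals; the `(k+1)`-st moment
is the `β`-derivative of the `k`-th, differentiation under the integral sign being justified by
the Gaussian bound `‖w‖ ^ k exp (D ‖w‖ - ‖w‖²) ≤ k! exp ((D + 1)² / 2) exp (-‖w‖² / 2)`.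
-/

noncomputable def gaussianMomentIntegrand (k : ℕ) (α β w : ℂ) : ℂ :=
  conj w ^ k * cexp (α * w + β * conj w - (‖w‖ : ℂ) ^ 2)

local notation "F" => gaussianMomentIntegrand

lemma pow_mul_exp_sub_sq_le (k : ℕ) (D : ℝ) {r : ℝ} (hr : 0 ≤ r) :
    r ^ k * Real.exp (D * r - r ^ 2) ≤
      k.factorial * Real.exp ((D + 1) ^ 2 / 2) * Real.exp (-r ^ 2 / 2) := by
  have hpow : r ^ k ≤ k.factorial * Real.exp r := by
    have := Real.pow_div_factorial_le_exp r hr k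
    rwa [div_le_iff₀ (by positivity), mul_comm] at this
  calc r ^ k * Real.exp (D * r - r ^ 2)
      ≤ k.factorial * Real.exp r * Real.exp (D * r - r ^ 2) := by gcongr
    _ = k.factorial * Real.exp ((D + 1) * r - r ^ 2 / 2 + -r ^ 2 / 2) := by
      rw [mul_assoc, ← Real.exp_add]; ring_nf
    _ ≤ k.factorial * Real.exp ((D + 1) ^ 2 / 2 + -r ^ 2 / 2) := by
      gcongr; nlinarith [sq_nonneg (D + 1 - r)]
    _ = k.factorial * Real.exp ((D + 1) ^ 2 / 2) * Real.exp (-r ^ 2 / 2) := by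
      rw [Real.exp_add, mul_assoc]

lemma norm_gaussianMomentIntegrand_le (k : ℕ) {α β : ℂ} {D : ℝ} (hD : ‖α‖ + ‖β‖ ≤ D) (w : ℂ) :
    ‖F k α β w‖ ≤ k.factorial * Real.exp ((D + 1) ^ 2 / 2) * Real.exp (-‖w‖ ^ 2 / 2) := by
  have hre : (α * w + β * conj w).re ≤ D * ‖w‖ :=
    calc (α * w + β * conj w).re ≤ ‖α * w + β * conj w‖ := re_le_norm _
      _ ≤ ‖α * w‖ + ‖β * conj w‖ := norm_add_le _ _
      _ = (‖α‖ + ‖β‖) * ‖w‖ := by simp only [norm_mul, RCLike.norm_conj]; ring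
      _ ≤ D * ‖w‖ := by gcongr
  calc ‖F k α β w‖ = ‖w‖ ^ k * Real.exp ((α * w + β * conj w).re - ‖w‖ ^ 2) := by
        simp [gaussianMomentIntegrand, norm_exp, ← ofReal_pow]
    _ ≤ ‖w‖ ^ k * Real.exp (D * ‖w‖ - ‖w‖ ^ 2) := by gcongr
    _ ≤ _ := pow_mul_exp_sub_sq_le k D (norm_nonneg w)

lemma integrable_exp_neg_sq_norm_div_two :
    Integrable (fun w : ℂ => Real.exp (-‖w‖ ^ 2 / 2)) := by
  refine (GaussianFourier.integrable_cexp_neg_mul_sq_norm_add (V := ℂ) (b := 1 / 2)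
    (by norm_num) 0 0).norm.congr (.of_forall fun w => ?_)
  simp [norm_exp, ← ofReal_pow, div_eq_inv_mul]

lemma continuous_gaussianMomentIntegrand (k : ℕ) (α β : ℂ) : Continuous (F k α β) := by
  unfold gaussianMomentIntegrand; fun_prop

lemma integrable_gaussianMomentIntegrand (k : ℕ) (α β : ℂ) : Integrable (F k α β) :=
  (integrable_exp_neg_sq_norm_div_two.const_mul _).mono'
    (continuous_gaussianMomentIntegrand k α β).aestronglyMeasurable
    (.of_forall (norm_gaussianMomentIntegrand_le k le_rfl))

lemma hasDerivAt_gaussianMomentIntegrand (k : ℕ) (α w β : ℂ) :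
    HasDerivAt (fun β => F k α β w) (F (k + 1) α β w) β :=
  ((((hasDerivAt_id' β).mul_const (conj w)).const_add (α * w)).sub_const
    ((‖w‖ : ℂ) ^ 2)).cexp.const_mul (conj w ^ k) |>.congr_deriv <| by
      rw [gaussianMomentIntegrand, pow_succ]; ring

lemma hasDerivAt_integral_gaussianMomentIntegrand (k : ℕ) (α β : ℂ) :
    HasDerivAt (fun β => ∫ w, F k α β w) (∫ w, F (k + 1) α β w) β := by
  have hbound : ∀ β' ∈ Metric.ball β 1, ∀ w,
      ‖F (k + 1) α β' w‖ ≤ (k + 1).factorial * Real.exp ((‖α‖ + (‖β‖ + 1) + 1) ^ 2 / 2) *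
        Real.exp (-‖w‖ ^ 2 / 2) := fun β' hβ' =>
    norm_gaussianMomentIntegrand_le (k + 1) (by
      have := norm_le_norm_add_norm_sub' β' β
      have := mem_ball_iff_norm.1 hβ'
      linarith)
  exact (hasDerivAt_integral_of_dominated_loc_of_deriv_le (Metric.ball_mem_nhds β one_pos)
    (.of_forall fun β' => (integrable_gaussianMomentIntegrand k α β').aestronglyMeasurable)
    (integrable_gaussianMomentIntegrand k α β)
    (integrable_gaussianMomentIntegrand (k + 1) α β).aestronglyMeasurable
    (.of_forall fun w β' hβ' => hbound β' hβ' w)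
    (integrable_exp_neg_sq_norm_div_two.const_mul _)
    (.of_forall fun w β' _ => hasDerivAt_gaussianMomentIntegrand k α w β')).2

lemma integral_gaussianMomentIntegrand_zero (α β : ℂ) :
    ∫ w, F 0 α β w = Real.pi * cexp (α * β) := by
  rw [← volume_preserving_equiv_pi.symm.integral_comp
    (MeasurableEquiv.measurableEmbedding _)]
  have h (v : Fin 2 → ℝ) : F 0 α β (measurableEquivPi.symm v) =
      cexp (-1 * ∑ i, (v i : ℂ) ^ 2 + ∑ i, ![α + β, (α - β) * I] i * v i) := by
    rw [measurableEquivPi_symm_apply, gaussianMomentIntegrand, ← ofReal_pow, Complex.sq_norm,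
      normSq_add_mul_I]
    simp only [Fin.sum_univ_two, Matrix.cons_val_zero, Matrix.cons_val_one, map_add, map_mul,
      conj_ofReal, conj_I, pow_zero, one_mul]
    push_cast
    ring_nf
  simp_rw [h, GaussianFourier.integral_cexp_neg_mul_sum_add (by norm_num : (0:ℝ) < (1:ℂ).re)]
  have hsq : (α + β) ^ 2 + ((α - β) * I) ^ 2 = 4 * (α * β) := by ring_nf; rw [I_sq]; ring
  simp [Fin.sum_univ_two, hsq]

lemma integral_gaussianMomentIntegrand (k : ℕ) (α β : ℂ) :
    ∫ w, F k α β w = Real.pi * α ^ k * cexp (α * β) := by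
  induction k generalizing β with
  | zero => simpa using integral_gaussianMomentIntegrand_zero α β
  | succ k ih =>
    have hderiv : HasDerivAt (fun β => Real.pi * α ^ k * cexp (α * β))
        (Real.pi * α ^ k * (cexp (α * β) * α)) β := by
      simpa using ((hasDerivAt_id β).const_mul α).cexp.const_mul (Real.pi * α ^ k : ℂ)
    have h := hasDerivAt_integral_gaussianMomentIntegrand k α β
    simp_rw [ih] at h
    rw [h.unique hderiv]
    ring

lemma exp_mul_qpoly_mul_exp_mul_exp (m : ℕ) (a b z w : ℂ) :
    cexp (a * w + b * conj w) * qpoly m (conj w * z) * cexp (conj z * w) *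
        cexp (-(‖w‖ : ℂ) ^ 2) =
      ∑ k ∈ Finset.range m, z ^ k / k.factorial * F k (a + conj z) b w := by
  simp only [qpoly, Finset.mul_sum, Finset.sum_mul]
  refine Finset.sum_congr rfl fun k _ => ?_
  rw [gaussianMomentIntegrand, sub_eq_add_neg, show (a + conj z) * w = a * w + conj z * w by ring]
  simp only [Complex.exp_add]
  ring

theorem stmt_8 (m : ℕ) (a b z : ℂ) :
    (Real.pi : ℂ)⁻¹ * ∫ w : ℂ, Complex.exp (a * w + b * conj w) * qpoly m (conj w * z) *
        Complex.exp (conj z * w) * Complex.exp (-(‖w‖ : ℂ) ^ 2) =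
      Complex.exp (b * (a + conj z)) * qpoly m (z * (a + conj z)) := by
  simp_rw [exp_mul_qpoly_mul_exp_mul_exp]
  rw [integral_finsetSum _ fun k _ =>
    (integrable_gaussianMomentIntegrand k _ b).const_mul _]
  simp_rw [integral_const_mul, integral_gaussianMomentIntegrand, qpoly, Finset.mul_sum]
  refine Finset.sum_congr rfl fun k _ => ?_
  rw [mul_pow]
  field_simp
end

section
/- Let m be a nonnegative integer. For all complex numbers b and z, (1/π)·∫_ℂ e^{b·conj(w)}·q_m(conj(z)·w)·q_m(conj(w)·z)·e^{-|w|^2} dA(w) = q_m(conj(z)·(b + z)). -/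
/-! Expanding both truncated exponentials turns the integral into a finite combination of the
moments `∫ e^{b w̄} w^j w̄^k e^{-|w|²} dA`. Expanding `e^{b w̄}` as a power series (dominated
convergence) and using the orthogonality `∫ w^j w̄^l e^{-|w|²} dA = π j! δ_{jl}` (polar
coordinates), such a moment is `π j! b^{j-k}/(j-k)!` for `k ≤ j` and `0` otherwise. The sum over
`k < m` is then the binomial expansion of `(z + b)^j / j!`, and the sum over `j < m` is
`q_m(z̄ (b + z))`. -/

open Complex MeasureTheory
open scoped ComplexConjugate
open scoped Nat

theorem pow_mul_exp_mul_mul_exp_neg_sq_le (n : ℕ) (c : ℝ) {t : ℝ} (ht : 0 ≤ t) :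
    t ^ n * Real.exp (c * t) * Real.exp (-t ^ 2)
      ≤ n ! * Real.exp ((1 + c) ^ 2 / 2) * Real.exp (-(1 / 2) * t ^ 2) := by
  have hpow : t ^ n ≤ n ! * Real.exp t := by
    rw [← div_le_iff₀' (by positivity)]
    exact Real.pow_div_factorial_le_exp t ht n
  calc t ^ n * Real.exp (c * t) * Real.exp (-t ^ 2)
      ≤ n ! * Real.exp t * Real.exp (c * t) * Real.exp (-t ^ 2) := by gcongr
    _ = n ! * Real.exp ((1 + c) * t - t ^ 2) := by
        rw [mul_assoc, mul_assoc, ← Real.exp_add, ← Real.exp_add]; ring_nf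
    _ ≤ n ! * Real.exp ((1 + c) ^ 2 / 2 + -(1 / 2) * t ^ 2) := by
        gcongr; nlinarith [sq_nonneg (t - (1 + c))]
    _ = _ := by rw [Real.exp_add, mul_assoc]

section Gaussian

variable {V : Type*} [NormedAddCommGroup V] [InnerProductSpace ℝ V] [FiniteDimensional ℝ V]
  [MeasurableSpace V] [BorelSpace V]

theorem integrable_exp_neg_mul_norm_sq {a : ℝ} (ha : 0 < a) :
    Integrable (fun v : V => Real.exp (-a * ‖v‖ ^ 2)) := by
  refine (GaussianFourier.integrable_cexp_neg_mul_sq_norm_add (V := V) (b := a)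
    (by simpa using ha) 0 0).norm.congr (.of_forall fun v => ?_)
  simp [norm_exp, ← ofReal_pow]

theorem integrable_norm_pow_mul_exp_mul_norm_mul_exp_neg_norm_sq (n : ℕ) (c : ℝ) :
    Integrable (fun v : V => ‖v‖ ^ n * Real.exp (c * ‖v‖) * Real.exp (-‖v‖ ^ 2)) := by
  refine ((integrable_exp_neg_mul_norm_sq one_half_pos).const_mul
    (n ! * Real.exp ((1 + c) ^ 2 / 2))).mono' (by fun_prop) (.of_forall fun v => ?_)
  rw [Real.norm_of_nonneg (by positivity)]
  exact pow_mul_exp_mul_mul_exp_neg_sq_le n c (norm_nonneg v)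

end Gaussian

theorem hasSum_pow_div_factorial_mul_ite {K : Type*} [Field K] [TopologicalSpace K] (b c : K)
    (j k : ℕ) :
    HasSum (fun n => b ^ n / n ! * if j = n + k then c else 0)
      (c * if k ≤ j then b ^ (j - k) / (j - k)! else 0) := by
  split_ifs with hkj
  · convert hasSum_ite_eq (j - k) (c * (b ^ (j - k) / (j - k)!)) using 2 with n
    by_cases hn : n = j - k
    · rw [hn, if_pos (by omega), if_pos rfl, mul_comm]
    · rw [if_neg (by omega), if_neg hn, mul_zero]
  · rw [mul_zero]
    convert hasSum_zero with n
    rw [if_neg (by omega), mul_zero]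

theorem sum_range_pow_div_factorial_mul_ite {K : Type*} [Field K] [CharZero K] {j m : ℕ}
    (hj : j < m) (x y : K) :
    ∑ k ∈ Finset.range m, x ^ k / k ! * (if k ≤ j then y ^ (j - k) / (j - k)! else 0)
      = (x + y) ^ j / j ! := by
  have hfilter : (Finset.range m).filter (· ≤ j) = Finset.range (j + 1) := by
    ext k; simp only [Finset.mem_filter, Finset.mem_range]; omega
  rw [add_pow, Finset.sum_div]
  simp_rw [mul_ite, mul_zero]
  rw [← Finset.sum_filter, hfilter]
  refine Finset.sum_congr rfl fun k hk => ?_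
  have hj : (j ! : K) ≠ 0 := Nat.cast_ne_zero.mpr j.factorial_ne_zero
  rw [Nat.cast_choose K (Finset.mem_range_succ_iff.mp hk)]
  field_simp

open Real in
theorem integral_cexp_int_mul_mul_I (n : ℤ) :
    ∫ θ in -π..π, cexp (n * θ * I) = if n = 0 then 2 * π else 0 := by
  split_ifs with hn
  · simp [hn, two_mul]
  have hc : (n : ℂ) * I ≠ 0 := by simp [hn]
  have hper : cexp (n * I * π) = cexp (n * I * (-π : ℝ)) := by
    rw [← mul_one (cexp (n * I * (-π : ℝ))), ← Complex.exp_int_mul_two_pi_mul_I n,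
      ← Complex.exp_add]
    push_cast; ring_nf
  have hrw : ∀ θ : ℝ, (n : ℂ) * θ * I = n * I * θ := fun θ => by ring
  simp_rw [hrw]
  rw [integral_exp_mul_complex hc, hper, sub_self, zero_div, ofReal_zero]

theorem integral_Ioi_pow_two_mul_add_one_mul_exp_neg_sq (j : ℕ) :
    ∫ r in Set.Ioi (0 : ℝ), r ^ (2 * j + 1) * Real.exp (-r ^ 2) = j ! / 2 := by
  have h := _root_.integral_rpow_mul_exp_neg_rpow (p := 2) (q := 2 * j + 1) two_pos
    (by linarith [j.cast_nonneg (α := ℝ)])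
  rw [show ((2 * j + 1 + 1 : ℝ)) / 2 = j + 1 by ring, Real.Gamma_nat_eq_factorial] at h
  rw [div_eq_inv_mul, ← one_div, ← h]
  refine setIntegral_congr_fun measurableSet_Ioi fun r _ => ?_
  norm_cast

theorem polarCoord_symm_pow_mul_conj_pow (r θ : ℝ) (j k : ℕ) :
    Complex.polarCoord.symm (r, θ) ^ j * conj (Complex.polarCoord.symm (r, θ)) ^ k
      = (r : ℂ) ^ (j + k) * cexp (((j - k : ℤ) : ℂ) * θ * I) := by
  have hpolar : Complex.polarCoord.symm (r, θ) = r * cexp (θ * I) := by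
    rw [Complex.polarCoord_symm_apply, exp_mul_I, ← ofReal_cos, ← ofReal_sin]
  rw [hpolar, map_mul, conj_ofReal, ← exp_conj, map_mul, conj_ofReal, conj_I, mul_pow, mul_pow,
    ← exp_nat_mul, ← exp_nat_mul, pow_add]
  have : ((j - k : ℤ) : ℂ) * θ * I = j * (θ * I) + k * (θ * -I) := by push_cast; ring
  rw [this, exp_add]
  ring

theorem integral_pow_mul_conj_pow_mul_exp_neg_sq (j k : ℕ) :
    ∫ w : ℂ, w ^ j * conj w ^ k * cexp (-(‖w‖ : ℂ) ^ 2)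
      = if j = k then (Real.pi * j ! : ℂ) else 0 := by
  have hpolar : ∀ p ∈ polarCoord.target,
      p.1 • (Complex.polarCoord.symm p ^ j * conj (Complex.polarCoord.symm p) ^ k *
        cexp (-(‖Complex.polarCoord.symm p‖ : ℂ) ^ 2))
      = ((p.1 ^ (j + k + 1) * Real.exp (-p.1 ^ 2) : ℝ) : ℂ)
        * cexp (((j - k : ℤ) : ℂ) * p.2 * I) := by
    rintro ⟨r, θ⟩ hr
    rw [norm_polarCoord_symm, abs_of_pos hr.1, polarCoord_symm_pow_mul_conj_pow, real_smul]
    push_cast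
    ring
  rw [← Complex.integral_comp_polarCoord_symm,
    setIntegral_congr_fun polarCoord.open_target.measurableSet hpolar, polarCoord_target,
    Measure.volume_eq_prod,
    setIntegral_prod_mul (fun r : ℝ => ((r ^ (j + k + 1) * Real.exp (-r ^ 2) : ℝ) : ℂ))
      (fun θ : ℝ => cexp (((j - k : ℤ) : ℂ) * θ * I)), integral_complex_ofReal,
    ← integral_Ioc_eq_integral_Ioo,
    ← intervalIntegral.integral_of_le (by linarith [Real.pi_pos]), integral_cexp_int_mul_mul_I]
  split_ifs with hzero hjk
  · subst hjk
    rw [← two_mul, integral_Ioi_pow_two_mul_add_one_mul_exp_neg_sq]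
    push_cast; ring
  · omega
  · omega
  · simp

theorem norm_pow_mul_conj_pow_mul_exp_neg_sq (w : ℂ) (j k : ℕ) :
    ‖w ^ j * conj w ^ k * cexp (-(‖w‖ : ℂ) ^ 2)‖ = ‖w‖ ^ (j + k) * Real.exp (-‖w‖ ^ 2) := by
  simp only [norm_mul, norm_pow, norm_conj, norm_exp, ← ofReal_pow, ← ofReal_neg, ofReal_re,
    pow_add]

theorem integrable_exp_mul_conj_mul_pow_mul_conj_pow_mul_exp_neg_sq (b : ℂ) (j k : ℕ) :
    Integrable (fun w : ℂ => cexp (b * conj w) * w ^ j * conj w ^ k * cexp (-(‖w‖ : ℂ) ^ 2)) := by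
  refine (integrable_norm_pow_mul_exp_mul_norm_mul_exp_neg_norm_sq (j + k) ‖b‖).mono'
    (by fun_prop) (.of_forall fun w => ?_)
  have hexp : ‖cexp (b * conj w)‖ ≤ Real.exp (‖b‖ * ‖w‖) := by
    simpa using norm_exp_le_exp_norm (b * conj w)
  have hsplit : cexp (b * conj w) * w ^ j * conj w ^ k * cexp (-(‖w‖ : ℂ) ^ 2)
      = cexp (b * conj w) * (w ^ j * conj w ^ k * cexp (-(‖w‖ : ℂ) ^ 2)) := by ring
  rw [hsplit, norm_mul, norm_pow_mul_conj_pow_mul_exp_neg_sq]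
  calc _ ≤ Real.exp (‖b‖ * ‖w‖) * (‖w‖ ^ (j + k) * Real.exp (-‖w‖ ^ 2)) := by gcongr
    _ = _ := by ring

theorem integral_exp_mul_conj_mul_pow_mul_conj_pow_mul_exp_neg_sq (b : ℂ) (j k : ℕ) :
    ∫ w : ℂ, cexp (b * conj w) * w ^ j * conj w ^ k * cexp (-(‖w‖ : ℂ) ^ 2)
      = Real.pi * j ! * if k ≤ j then b ^ (j - k) / (j - k)! else 0 := by
  have hterm : ∀ w : ℂ, HasSum
      (fun n => b ^ n / n ! * (w ^ j * conj w ^ (n + k) * cexp (-(‖w‖ : ℂ) ^ 2)))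
      (cexp (b * conj w) * w ^ j * conj w ^ k * cexp (-(‖w‖ : ℂ) ^ 2)) := fun w => by
    have hfun : (fun n => b ^ n / n ! * (w ^ j * conj w ^ (n + k) * cexp (-(‖w‖ : ℂ) ^ 2)))
        = fun n => (b * conj w) ^ n / n ! * (w ^ j * conj w ^ k * cexp (-(‖w‖ : ℂ) ^ 2)) := by
      ext n; rw [mul_pow, pow_add]; ring
    have hexp := NormedSpace.expSeries_div_hasSum_exp (b * conj w)
    rw [← exp_eq_exp_ℂ] at hexp
    rw [hfun, mul_assoc (cexp _) (w ^ j), mul_assoc (cexp _)]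
    exact hexp.mul_right _
  have hsum := hasSum_integral_of_dominated_convergence (μ := volume)
    (fun n w => (‖b‖ * ‖w‖) ^ n / n ! * (‖w‖ ^ (j + k) * Real.exp (-‖w‖ ^ 2)))
    (fun n => by fun_prop) (fun n => .of_forall fun w => ?_)
    (.of_forall fun w => (Real.summable_pow_div_factorial _).mul_right _) ?_
    (.of_forall hterm)
  · simp_rw [integral_const_mul, integral_pow_mul_conj_pow_mul_exp_neg_sq] at hsum
    exact hsum.unique (hasSum_pow_div_factorial_mul_ite b _ j k)
  · rw [norm_mul, norm_pow_mul_conj_pow_mul_exp_neg_sq, norm_div, norm_pow, Complex.norm_natCast,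
      mul_pow, pow_add, pow_add]
    exact le_of_eq (by ring)
  · have htsum : ∀ w : ℂ,
        ∑' n, (‖b‖ * ‖w‖) ^ n / n ! * (‖w‖ ^ (j + k) * Real.exp (-‖w‖ ^ 2))
          = ‖w‖ ^ (j + k) * Real.exp (‖b‖ * ‖w‖) * Real.exp (-‖w‖ ^ 2) := fun w => by
      have hexp := NormedSpace.expSeries_div_hasSum_exp (‖b‖ * ‖w‖)
      rw [← Real.exp_eq_exp_ℝ] at hexp
      rw [tsum_mul_right, hexp.tsum_eq]
      ring
    simp_rw [htsum]
    exact integrable_norm_pow_mul_exp_mul_norm_mul_exp_neg_norm_sq (j + k) ‖b‖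

theorem mul_qpoly_mul_qpoly_mul_eq_sum (m : ℕ) (A B x y u v : ℂ) :
    A * qpoly m (x * u) * qpoly m (v * y) * B
      = ∑ j ∈ Finset.range m, ∑ k ∈ Finset.range m,
          x ^ j / j ! * (y ^ k / k !) * (A * u ^ j * v ^ k * B) := by
  simp only [qpoly, Finset.mul_sum, Finset.sum_mul]
  rw [Finset.sum_comm]
  refine Finset.sum_congr rfl fun j _ => Finset.sum_congr rfl fun k _ => ?_
  ring

theorem stmt_9 (m : ℕ) (b z : ℂ) :
    (Real.pi : ℂ)⁻¹ * ∫ w : ℂ, Complex.exp (b * conj w) * qpoly m (conj z * w) *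
        qpoly m (conj w * z) * Complex.exp (-(‖w‖ : ℂ) ^ 2) =
      qpoly m (conj z * (b + z)) := by
  have hint : ∀ j k, Integrable fun w : ℂ => conj z ^ j / j ! * (z ^ k / k !) *
      (cexp (b * conj w) * w ^ j * conj w ^ k * cexp (-(‖w‖ : ℂ) ^ 2)) := fun j k =>
    (integrable_exp_mul_conj_mul_pow_mul_conj_pow_mul_exp_neg_sq b j k).const_mul _
  simp_rw [mul_qpoly_mul_qpoly_mul_eq_sum]
  rw [integral_finsetSum _ fun j _ => integrable_finsetSum _ fun k _ => hint j k, qpoly,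
    Finset.mul_sum]
  refine Finset.sum_congr rfl fun j hj => ?_
  rw [integral_finsetSum _ fun k _ => hint j k]
  simp_rw [integral_const_mul, integral_exp_mul_conj_mul_pow_mul_conj_pow_mul_exp_neg_sq]
  have hfac : (j ! : ℂ) ≠ 0 := Nat.cast_ne_zero.mpr j.factorial_ne_zero
  have hπ : (Real.pi : ℂ) ≠ 0 := ofReal_ne_zero.mpr Real.pi_ne_zero
  have hterm : ∀ k ∈ Finset.range m,
      conj z ^ j / j ! * (z ^ k / k !) *
          (Real.pi * j ! * if k ≤ j then b ^ (j - k) / (j - k)! else 0)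
        = Real.pi * conj z ^ j * (z ^ k / k ! * if k ≤ j then b ^ (j - k) / (j - k)! else 0) :=
    fun k _ => by field_simp
  rw [Finset.sum_congr rfl hterm, ← Finset.mul_sum,
    sum_range_pow_div_factorial_mul_ite (Finset.mem_range.mp hj), add_comm z b, mul_pow]
  field_simp
end

section
/- Let m ≥ 1 be an integer. Suppose N, M ≥ 1, a_1,…,a_N, A_1,…,A_N ∈ ℂ, C_1,…,C_M ∈ ℂ, and p_1,…,p_M are holomorphic polynomials such that Σ_{i=1}^N a_i·K_m(z, A_i) = Σ_{j=1}^M p_j(z)·e^{C_j z} for every z ∈ ℂ. Then the function z ↦ Σ_{i=1}^N a_i·K_m(z, A_i) is constant. -/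
open Complex MeasureTheory
open scoped ComplexConjugate

/-- Reproducing kernel of the Fock–Sobolev space `F^{2,m}`. -/
noncomputable def Km (m : ℕ) (z w : ℂ) : ℂ :=
  ∑' k : ℕ, ((m.factorial : ℂ) / ((k + m).factorial : ℂ)) * (z * conj w) ^ k

/-- Gaussian type weight `|w|^{2m} e^{-|w|^2}`, as a complex number. -/
noncomputable def fsWeight (m : ℕ) (w : ℂ) : ℂ :=
  Complex.ofReal (‖w‖ ^ (2 * m) * Real.exp (-‖w‖ ^ 2))

/-- The projection `P` onto the Fock–Sobolev space, applied to `φ`. -/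
noncomputable def fockProj (m : ℕ) (φ : ℂ → ℂ) (z : ℂ) : ℂ :=
  ((Real.pi : ℂ) * (m.factorial : ℂ))⁻¹ * ∫ w : ℂ, φ w * Km m z w * fsWeight m w

/-- The semi-commutant `(T_f, T_{conj g}]` vanishes on the span of kernel functions. -/
def SemiCommVanishes (m : ℕ) (f g : ℂ → ℂ) : Prop :=
  ∀ a z : ℂ,
    fockProj m (fun w => f w * conj (g w) * Km m w a) z =
      f z * fockProj m (fun w => conj (g w) * Km m w a) z

/-- The Berezin transform on the Fock–Sobolev space `F^{2,m}`. -/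
noncomputable def Berezin (m : ℕ) (φ : ℂ → ℂ) (z : ℂ) : ℂ :=
  ((Real.pi : ℂ) * (m.factorial : ℂ) * Km m z z)⁻¹ *
    ∫ w : ℂ, φ w * (Complex.ofReal (‖Km m z w‖ ^ 2)) * fsWeight m w

/-- The norm of the Fock–Sobolev space `F^{2,m}`. -/
noncomputable def fsNorm (m : ℕ) (h : ℂ → ℂ) : ℝ :=
  Real.sqrt ((Real.pi * m.factorial)⁻¹ *
    ∫ z : ℂ, ‖h z‖ ^ 2 * ‖z‖ ^ (2 * m) * Real.exp (-‖z‖ ^ 2))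

/-- The semi-commutant `(T_f, T_{conj g}]` is bounded on `F^{2,m}`. -/
def SemiCommBounded (m : ℕ) (f g : ℂ → ℂ) : Prop :=
  ∃ C > (0 : ℝ), ∀ h : Polynomial ℂ,
    fsNorm m (fun z =>
      fockProj m (fun w => f w * conj (g w) * h.eval w) z -
        f z * fockProj m (fun w => conj (g w) * h.eval w) z) ≤
      C * fsNorm m (fun z => h.eval z)

/-!
For `w ≠ 0`, multiplying by `zᵐ` turns `K_m(·, w)` into the exponential polynomial
`(m!/w̄ᵐ)(e^{w̄z} - q_m(w̄z))`, while `K_m(·, 0) = 1`. Exponential polynomials have unique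
coefficient polynomials, so after multiplying the hypothesis by `zᵐ` we may compare, for each
`w ≠ 0`, the constant coefficients at the frequency `w̄`: on the right-hand side it vanishes
because of the factor `zᵐ`, on the left it is `m!/w̄ᵐ` times the sum of
the `aᵢ` with `Aᵢ = w`. Hence only the terms with `Aᵢ = 0` survive, and these are constant.
-/

open Polynomial

noncomputable def twistedDerivative (ν : ℂ) (P : ℂ[X]) : ℂ[X] :=
  derivative P + C ν * P

lemma twistedDerivative_zero : twistedDerivative 0 = derivative := by
  funext P
  simp [twistedDerivative]

lemma twistedDerivative_ne_zero {ν : ℂ} (hν : ν ≠ 0) {P : ℂ[X]} (hP : P ≠ 0) :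
    twistedDerivative ν P ≠ 0 := by
  have hdeg : (twistedDerivative ν P).degree = P.degree := by
    rw [twistedDerivative, degree_add_eq_right_of_degree_lt] <;> rw [degree_C_mul hν]
    exact degree_derivative_lt hP
  exact degree_ne_bot.1 (hdeg ▸ degree_ne_bot.2 hP)

lemma iterate_twistedDerivative_ne_zero {ν : ℂ} (hν : ν ≠ 0) {P : ℂ[X]} (hP : P ≠ 0)
    (n : ℕ) : (twistedDerivative ν)^[n] P ≠ 0 := by
  induction n with
  | zero => exact hP
  | succ n ih =>
    rw [Function.iterate_succ_apply']
    exact twistedDerivative_ne_zero hν ih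

lemma hasDerivAt_eval_mul_exp (P : ℂ[X]) (ν z : ℂ) :
    HasDerivAt (fun z => P.eval z * exp (ν * z))
      ((twistedDerivative ν P).eval z * exp (ν * z)) z := by
  have hexp : HasDerivAt (fun z => exp (ν * z)) (exp (ν * z) * ν) z := by
    simpa using ((hasDerivAt_id z).const_mul ν).cexp
  refine ((P.hasDerivAt z).mul hexp).congr_deriv ?_
  simp only [twistedDerivative, eval_add, eval_mul, eval_C]
  ring

/-- This is `d/dz - c` applied to the vanishing sum. -/
lemma sum_eval_twistedDerivative_mul_exp_eq_zero {s : Finset ℂ} {Q : ℂ → ℂ[X]}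
    (h : ∀ z, ∑ ν ∈ s, (Q ν).eval z * exp (ν * z) = 0) (c z : ℂ) :
    ∑ ν ∈ s, (twistedDerivative (ν - c) (Q ν)).eval z * exp (ν * z) = 0 := by
  have hderiv := HasDerivAt.fun_sum fun ν (_ : ν ∈ s) => hasDerivAt_eval_mul_exp (Q ν) ν z
  simp only [funext h] at hderiv
  have hzero := (hasDerivAt_const z (0 : ℂ)).unique hderiv
  calc ∑ ν ∈ s, (twistedDerivative (ν - c) (Q ν)).eval z * exp (ν * z)
      = ∑ ν ∈ s, (twistedDerivative ν (Q ν)).eval z * exp (ν * z)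
          - c * ∑ ν ∈ s, (Q ν).eval z * exp (ν * z) := by
        rw [Finset.mul_sum, ← Finset.sum_sub_distrib]
        refine Finset.sum_congr rfl fun ν _ => ?_
        simp only [twistedDerivative, eval_add, eval_mul, eval_C]
        ring
    _ = 0 := by rw [← hzero, h, mul_zero, sub_zero]

lemma sum_eval_iterate_twistedDerivative_mul_exp_eq_zero {s : Finset ℂ} {Q : ℂ → ℂ[X]}
    (h : ∀ z, ∑ ν ∈ s, (Q ν).eval z * exp (ν * z) = 0) (c : ℂ) (n : ℕ) (z : ℂ) :
    ∑ ν ∈ s, ((twistedDerivative (ν - c))^[n] (Q ν)).eval z * exp (ν * z) = 0 := by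
  induction n generalizing z with
  | zero => exact h z
  | succ n ih =>
    simp only [Function.iterate_succ_apply']
    exact sum_eval_twistedDerivative_mul_exp_eq_zero ih c z

/-- Enough applications of `d/dz - ν₀` kill the polynomial at the frequency `ν₀`, but keep every
other polynomial nonzero, so induction on `s` applies. -/
theorem eq_zero_of_sum_eval_mul_exp_eq_zero (s : Finset ℂ) (Q : ℂ → ℂ[X])
    (h : ∀ z, ∑ ν ∈ s, (Q ν).eval z * exp (ν * z) = 0) : ∀ ν ∈ s, Q ν = 0 := by
  classical
  induction s using Finset.induction_on generalizing Q with
  | empty => simp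
  | insert ν₀ s hν₀ ih =>
    set n := (Q ν₀).natDegree + 1
    have hkill : (twistedDerivative 0)^[n] (Q ν₀) = 0 := by
      rw [twistedDerivative_zero]
      exact iterate_derivative_eq_zero (Nat.lt_succ_self _)
    have hrest : ∀ ν ∈ s, Q ν = 0 := by
      refine fun ν hν => by_contra fun hQ => iterate_twistedDerivative_ne_zero
        (sub_ne_zero.2 (ne_of_mem_of_not_mem hν hν₀)) hQ n ?_
      refine ih (fun ν => (twistedDerivative (ν - ν₀))^[n] (Q ν)) (fun z => ?_) ν hν
      simpa [Finset.sum_insert hν₀, hkill] using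
        sum_eval_iterate_twistedDerivative_mul_exp_eq_zero h ν₀ n z
    have hν₀ : Q ν₀ = 0 := by
      refine Polynomial.funext fun z => ?_
      have hz := h z
      rw [Finset.sum_insert hν₀, Finset.sum_eq_zero fun ν hν => by rw [hrest ν hν, eval_zero,
        zero_mul], add_zero] at hz
      simpa [exp_ne_zero] using hz
    simpa [hν₀] using hrest

noncomputable def expPolyEval : (ℂ →₀ ℂ[X]) →ₗ[ℂ] ℂ → ℂ :=
  Finsupp.lsum ℂ fun ν =>
    { toFun := fun P z => P.eval z * exp (ν * z)
      map_add' := fun P Q => by ext z; simp [add_mul]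
      map_smul' := fun c P => by ext z; simp [mul_assoc] }

lemma expPolyEval_single (ν : ℂ) (P : ℂ[X]) (z : ℂ) :
    expPolyEval (Finsupp.single ν P) z = P.eval z * exp (ν * z) := by
  rw [expPolyEval, Finsupp.lsum_single]
  rfl

lemma expPolyEval_injective : Function.Injective expPolyEval := by
  refine (injective_iff_map_eq_zero _).2 fun Q hQ => Finsupp.ext fun ν => ?_
  by_contra hν
  refine hν (eq_zero_of_sum_eval_mul_exp_eq_zero Q.support Q (fun z => ?_) ν
    (Finsupp.mem_support_iff.2 hν))
  simpa [expPolyEval, Finsupp.lsum_apply, Finsupp.sum] using congrFun hQ z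

lemma Km_zero_right (m : ℕ) (z : ℂ) : Km m z 0 = 1 := by
  rw [Km, tsum_eq_single 0 fun k hk => by simp [zero_pow hk]]
  simp [Nat.factorial_ne_zero]

lemma pow_mul_tsum_factorial_div (m : ℕ) (u : ℂ) :
    u ^ m * ∑' k : ℕ, ((m.factorial : ℂ) / ((k + m).factorial : ℂ)) * u ^ k
      = (m.factorial : ℂ) * (exp u - qpoly m u) := by
  have htail : HasSum (fun k : ℕ => u ^ (k + m) / ((k + m).factorial : ℂ)) (exp u - qpoly m u) := by
    rw [exp_eq_exp_ℂ, qpoly, hasSum_nat_add_iff' m (f := fun n => u ^ n / (n.factorial : ℂ))]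
    exact NormedSpace.expSeries_div_hasSum_exp u
  rw [← (htail.mul_left _).tsum_eq, ← tsum_mul_left]
  congr 1 with k
  ring

lemma pow_mul_Km {w : ℂ} (hw : w ≠ 0) (m : ℕ) (z : ℂ) :
    z ^ m * Km m z w =
      (m.factorial : ℂ) / conj w ^ m * (exp (conj w * z) - qpoly m (conj w * z)) := by
  have hw' : conj w ^ m ≠ 0 := pow_ne_zero _ (by simpa using hw)
  calc z ^ m * Km m z w = (z * conj w) ^ m * Km m z w / conj w ^ m := by
        rw [mul_pow, mul_right_comm, mul_div_assoc, div_self hw', mul_one]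
    _ = _ := by rw [Km, pow_mul_tsum_factorial_div, mul_comm z]; ring

noncomputable def taylorExpPoly (m : ℕ) (c : ℂ) : ℂ[X] :=
  ∑ k ∈ Finset.range m, C (c ^ k / (k.factorial : ℂ)) * X ^ k

lemma eval_taylorExpPoly (m : ℕ) (c z : ℂ) : (taylorExpPoly m c).eval z = qpoly m (c * z) := by
  simp [taylorExpPoly, qpoly, eval_finsetSum, mul_pow, div_mul_eq_mul_div]

noncomputable def kernelExpPoly (m : ℕ) (w : ℂ) : ℂ →₀ ℂ[X] :=
  if w = 0 then Finsupp.single 0 (X ^ m)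
  else Finsupp.single (conj w) (C ((m.factorial : ℂ) / conj w ^ m)) -
    Finsupp.single 0 (C ((m.factorial : ℂ) / conj w ^ m) * taylorExpPoly m (conj w))

lemma expPolyEval_kernelExpPoly (m : ℕ) (w z : ℂ) :
    expPolyEval (kernelExpPoly m w) z = z ^ m * Km m z w := by
  by_cases hw : w = 0
  · simp [kernelExpPoly, hw, expPolyEval_single, Km_zero_right]
  · simp only [kernelExpPoly, hw, if_false, map_sub, Pi.sub_apply, expPolyEval_single,
      pow_mul_Km hw, eval_mul, eval_C, eval_taylorExpPoly, zero_mul, exp_zero]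
    ring

lemma coeff_zero_kernelExpPoly_conj (m : ℕ) (w : ℂ) {w' : ℂ} (hw' : w' ≠ 0) :
    (kernelExpPoly m w (conj w')).coeff 0 =
      if w = w' then (m.factorial : ℂ) / conj w' ^ m else 0 := by
  have hw'' : (0 : ℂ) ≠ conj w' := ((_root_.map_ne_zero _).2 hw').symm
  by_cases hw : w = 0
  · simp [kernelExpPoly, hw, hw'', Ne.symm hw']
  · rcases eq_or_ne w w' with rfl | hne <;>
      simp [kernelExpPoly, (starRingEnd ℂ).injective.eq_iff, *]

lemma sum_mul_eq_of_fiber_sum_eq_zero {ι α R : Type*} [Fintype ι] [DecidableEq α]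
    [CommSemiring R] (a : ι → R) (A : ι → α) (f : α → R) (x₀ : α)
    (h : ∀ x ≠ x₀, ∑ i with A i = x, a i = 0) :
    ∑ i, a i * f (A i) = (∑ i with A i = x₀, a i) * f x₀ := by
  rw [← Finset.sum_fiberwise_of_maps_to (t := insert x₀ (Finset.univ.image A)) (g := A)
    fun i _ => Finset.mem_insert_of_mem (Finset.mem_image_of_mem A (Finset.mem_univ i))]
  have hfiber : ∀ x, ∑ i with A i = x, a i * f (A i) = (∑ i with A i = x, a i) * f x := by
    intro x
    rw [Finset.sum_mul]
    exact Finset.sum_congr rfl fun i hi => by rw [(Finset.mem_filter.1 hi).2]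
  simp only [hfiber]
  exact Finset.sum_eq_single_of_mem x₀ (Finset.mem_insert_self _ _)
    fun x _ hx => by rw [h x hx, zero_mul]

theorem stmt_18_general (m : ℕ) (hm : 1 ≤ m) (N M : ℕ)
    (a : Fin N → ℂ) (A : Fin N → ℂ) (Cc : Fin M → ℂ) (p : Fin M → Polynomial ℂ)
    (h : ∀ z : ℂ, ∑ i, a i * Km m z (A i) = ∑ j, (p j).eval z * Complex.exp (Cc j * z)) :
    ∃ c : ℂ, ∀ z : ℂ, ∑ i, a i * Km m z (A i) = c := by
  classical
  have hrep : ∑ i, a i • kernelExpPoly m (A i) = ∑ j, Finsupp.single (Cc j) (X ^ m * p j) := by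
    refine expPolyEval_injective (funext fun z => ?_)
    simp only [map_sum, map_smul, Finset.sum_apply, Pi.smul_apply, smul_eq_mul,
      expPolyEval_kernelExpPoly, expPolyEval_single, eval_mul, eval_pow, eval_X,
      mul_left_comm (a _), mul_assoc, ← Finset.mul_sum, h z]
  have hfiber : ∀ w ≠ 0, ∑ i with A i = w, a i = 0 := by
    intro w hw
    have hcoeff := congrArg (fun Q => (Q (conj w)).coeff 0) hrep
    have hm0 : ¬m ≤ 0 := by omega
    simp only [Finsupp.finsetSum_apply, Finsupp.smul_apply, coeff_smul, finsetSum_coeff,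
      coeff_zero_kernelExpPoly_conj _ _ hw, Finsupp.single_apply, apply_ite (coeff · 0),
      coeff_X_pow_mul', hm0, if_false, coeff_zero, ite_self, Finset.sum_const_zero, smul_eq_mul,
      mul_ite, mul_zero] at hcoeff
    rw [← Finset.sum_filter, ← Finset.sum_mul] at hcoeff
    exact (mul_eq_zero.1 hcoeff).resolve_right
      (div_ne_zero (Nat.cast_ne_zero.2 (Nat.factorial_ne_zero m)) (pow_ne_zero _ (by simpa)))
  exact ⟨_, fun z => by rw [sum_mul_eq_of_fiber_sum_eq_zero a A _ 0 hfiber, Km_zero_right, mul_one]⟩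

theorem stmt_18 (m : ℕ) (hm : 1 ≤ m) (N M : ℕ) (hN : 1 ≤ N) (hM : 1 ≤ M)
    (a : Fin N → ℂ) (A : Fin N → ℂ) (Cc : Fin M → ℂ) (p : Fin M → Polynomial ℂ)
    (h : ∀ z : ℂ, ∑ i, a i * Km m z (A i) = ∑ j, (p j).eval z * Complex.exp (Cc j * z)) :
    ∃ c : ℂ, ∀ z : ℂ, ∑ i, a i * Km m z (A i) = c :=
  stmt_18_general m hm N M a A Cc p h
end
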